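/- arXiv:2010.04720 — 3 statements merged into one kernel-verified Lean document; each statement's English description precedes it below -/
import Mathlib

section
/- Let n ≥ 1, let K ⊂ ℝⁿ be a non-empty closed set and let λ > 0. Then for every x ∈ ℝⁿ, C^u_λ(χ_K)(x) = C^u_λ(D²_λ(·, K))(x), i.e. the upper compensated convex transform of the characteristic function of K coincides with the upper compensated convex transform of the distance-based function D²_λ(·, K). -/
/-- Convex envelope: pointwise sup of affine minorants. -/
noncomputable def convEnv {n : ℕ} (g : EuclideanSpace ℝ (Fin n) → ℝ)
    (x : EuclideanSpace ℝ (Fin n)) : ℝ :=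
  sSup {a : ℝ | ∃ ℓ : EuclideanSpace ℝ (Fin n) →ᵃ[ℝ] ℝ, (∀ y, ℓ y ≤ g y) ∧ a = ℓ x}

/-- Upper compensated convex transform. -/
noncomputable def upperT {n : ℕ} (lam : ℝ) (f : EuclideanSpace ℝ (Fin n) → ℝ)
    (x : EuclideanSpace ℝ (Fin n)) : ℝ :=
  lam * ‖x‖ ^ 2 - convEnv (fun y => lam * ‖y‖ ^ 2 - f y) x

/-- Characteristic function of a set: `χ_K(x) = 1` if `x ∈ K`, `0` otherwise. -/
noncomputable def chi {n : ℕ} (K : Set (EuclideanSpace ℝ (Fin n)))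
    (x : EuclideanSpace ℝ (Fin n)) : ℝ :=
  K.indicator (fun _ => (1 : ℝ)) x

/-- The distance-based function `D²_λ(x, K) = (max{0, 1 − √λ·dist(x,K)})²`. -/
noncomputable def distSq {n : ℕ} (lam : ℝ) (K : Set (EuclideanSpace ℝ (Fin n)))
    (x : EuclideanSpace ℝ (Fin n)) : ℝ :=
  (max 0 (1 - Real.sqrt lam * Metric.infDist x K)) ^ 2

/-! An affine `ℓ` is a minorant of `λ|·|² - χ_K` iff `φ = λ|·|² - ℓ` is nonnegative everywhere
and at least `1` on `K`. Along a line `φ` is a quadratic with leading coefficient `λ` times the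
squared speed, so comparing `y` with a point `z ∈ K` and with the point `w` of the ray from `z`
through `y` at distance `1/√λ` from `z` gives `φ y ≥ (1 - √λ |y - z|)²`. Taking the infimum
over `z ∈ K` yields `φ ≥ D²_λ(·, K)`; as `χ_K ≤ D²_λ(·, K)`, the functions `λ|·|² - χ_K` and
`λ|·|² - D²_λ(·, K)` have the same affine minorants. -/

open AffineMap Metric

section

variable {E : Type*} [NormedAddCommGroup E] [InnerProductSpace ℝ E]

theorem norm_lineMap_sq (z w : E) (t : ℝ) :
    ‖lineMap z w t‖ ^ 2 = (1 - t) * ‖z‖ ^ 2 + t * ‖w‖ ^ 2 - t * (1 - t) * ‖w - z‖ ^ 2 := by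
  have hw : w = z + (w - z) := by abel
  rw [lineMap_apply_module', add_comm, norm_add_sq_real, norm_smul, real_inner_smul_right,
    mul_pow, Real.norm_eq_abs, sq_abs]
  nth_rewrite 3 [hw]
  rw [norm_add_sq_real]
  ring

theorem sq_norm_sub_affine_lineMap (lam : ℝ) (ℓ : E →ᵃ[ℝ] ℝ) (z w : E) (t : ℝ) :
    lam * ‖lineMap z w t‖ ^ 2 - ℓ (lineMap z w t) =
      (1 - t) * (lam * ‖z‖ ^ 2 - ℓ z) + t * (lam * ‖w‖ ^ 2 - ℓ w)
        - lam * t * (1 - t) * ‖w - z‖ ^ 2 := by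
  rw [norm_lineMap_sq, apply_lineMap, lineMap_apply_module, smul_eq_mul, smul_eq_mul]
  ring

theorem sq_one_sub_le_sq_norm_sub_affine {lam : ℝ} (hlam : 0 < lam) {ℓ : E →ᵃ[ℝ] ℝ}
    (hℓ : ∀ y, ℓ y ≤ lam * ‖y‖ ^ 2) {z : E} (hz : ℓ z ≤ lam * ‖z‖ ^ 2 - 1) {y : E}
    (hyz : √lam * dist y z ≤ 1) :
    (1 - √lam * dist y z) ^ 2 ≤ lam * ‖y‖ ^ 2 - ℓ y := by
  rcases eq_or_ne y z with rfl | hne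
  · simpa using (le_sub_comm.mp hz)
  set t := √lam * dist y z
  have ht : 0 < t := mul_pos (Real.sqrt_pos.mpr hlam) (dist_pos.mpr hne)
  set w := z + t⁻¹ • (y - z)
  have hy : y = lineMap z w t := by
    simp [w, lineMap_apply_module', smul_smul, ht.ne']
  have hwz : lam * ‖w - z‖ ^ 2 = 1 := by
    simp only [w, add_sub_cancel_left, norm_smul, mul_pow, Real.norm_eq_abs, sq_abs, t,
      ← dist_eq_norm, Real.sq_sqrt hlam.le, inv_pow, mul_pow]
    field_simp [(dist_pos.mpr hne).ne', hlam.ne']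
  have hφ : lam * ‖y‖ ^ 2 - ℓ y =
      (1 - t) * (lam * ‖z‖ ^ 2 - ℓ z) + t * (lam * ‖w‖ ^ 2 - ℓ w) - t * (1 - t) := by
    rw [hy, sq_norm_sub_affine_lineMap]
    linear_combination (-(t * (1 - t))) * hwz
  rw [hφ]
  nlinarith [mul_le_mul_of_nonneg_left (le_sub_comm.mp hz) (sub_nonneg.mpr hyz),
    mul_nonneg ht.le (sub_nonneg.mpr (hℓ w))]

theorem one_sub_le_sqrt_sq_norm_sub_affine {lam : ℝ} (hlam : 0 < lam) {ℓ : E →ᵃ[ℝ] ℝ}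
    (hℓ : ∀ y, ℓ y ≤ lam * ‖y‖ ^ 2) {z : E} (hz : ℓ z ≤ lam * ‖z‖ ^ 2 - 1) (y : E) :
    1 - √lam * dist y z ≤ √(lam * ‖y‖ ^ 2 - ℓ y) := by
  rcases le_or_gt (√lam * dist y z) 1 with hyz | hyz
  · exact Real.le_sqrt_of_sq_le (sq_one_sub_le_sq_norm_sub_affine hlam hℓ hz hyz)
  · exact (sub_neg.mpr hyz).le.trans (Real.sqrt_nonneg _)

theorem sq_max_one_sub_infDist_le {lam : ℝ} (hlam : 0 < lam) {K : Set E} (hK : K.Nonempty)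
    {ℓ : E →ᵃ[ℝ] ℝ} (hℓ : ∀ y, ℓ y ≤ lam * ‖y‖ ^ 2) (hℓK : ∀ z ∈ K, ℓ z ≤ lam * ‖z‖ ^ 2 - 1)
    (y : E) :
    (max 0 (1 - √lam * infDist y K)) ^ 2 ≤ lam * ‖y‖ ^ 2 - ℓ y := by
  have hsqrt : 0 < √lam := Real.sqrt_pos.mpr hlam
  have hdist : (1 - √(lam * ‖y‖ ^ 2 - ℓ y)) / √lam ≤ infDist y K :=
    (le_infDist hK).mpr fun z hz ↦ (div_le_iff₀' hsqrt).mpr <|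
      sub_le_comm.mp (one_sub_le_sqrt_sq_norm_sub_affine hlam hℓ (hℓK z hz) y)
  have hmax : max 0 (1 - √lam * infDist y K) ≤ √(lam * ‖y‖ ^ 2 - ℓ y) :=
    max_le (Real.sqrt_nonneg _) (sub_le_comm.mp ((div_le_iff₀' hsqrt).mp hdist))
  calc (max 0 (1 - √lam * infDist y K)) ^ 2 ≤ √(lam * ‖y‖ ^ 2 - ℓ y) ^ 2 :=
        pow_le_pow_left₀ (le_max_left _ _) hmax 2
    _ = lam * ‖y‖ ^ 2 - ℓ y := Real.sq_sqrt (sub_nonneg.mpr (hℓ y))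

end

theorem convEnv_congr {n : ℕ} {g h : EuclideanSpace ℝ (Fin n) → ℝ}
    (hgh : ∀ ℓ : EuclideanSpace ℝ (Fin n) →ᵃ[ℝ] ℝ, (∀ y, ℓ y ≤ g y) ↔ ∀ y, ℓ y ≤ h y) :
    convEnv g = convEnv h := by
  funext x
  simp only [convEnv, hgh]

theorem chi_le_distSq {n : ℕ} (K : Set (EuclideanSpace ℝ (Fin n))) (lam : ℝ)
    (y : EuclideanSpace ℝ (Fin n)) : chi K y ≤ distSq lam K y := by
  by_cases hy : y ∈ K
  · simp [chi, distSq, hy, infDist_zero_of_mem hy]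
  · simp only [chi, distSq, hy, Set.indicator_of_notMem, not_false_eq_true]
    positivity

theorem affine_le_sub_chi_iff_le_sub_distSq {n : ℕ} {K : Set (EuclideanSpace ℝ (Fin n))}
    (hK : K.Nonempty) {lam : ℝ} (hlam : 0 < lam) (ℓ : EuclideanSpace ℝ (Fin n) →ᵃ[ℝ] ℝ) :
    (∀ y, ℓ y ≤ lam * ‖y‖ ^ 2 - chi K y) ↔ ∀ y, ℓ y ≤ lam * ‖y‖ ^ 2 - distSq lam K y := by
  refine ⟨fun h y ↦ ?_, fun h y ↦ (h y).trans (by linarith [chi_le_distSq K lam y])⟩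
  have hℓ (y) : ℓ y ≤ lam * ‖y‖ ^ 2 :=
    (h y).trans (sub_le_self _ (Set.indicator_nonneg (fun _ _ ↦ zero_le_one) y))
  have hℓK : ∀ z ∈ K, ℓ z ≤ lam * ‖z‖ ^ 2 - 1 := fun z hz ↦ by
    simpa [chi, hz] using h z
  exact le_sub_comm.mp (sq_max_one_sub_infDist_le hlam hK hℓ hℓK y)

theorem upperT_chi_eq_upperT_distSq_general (n : ℕ)
    (K : Set (EuclideanSpace ℝ (Fin n))) (hK : K.Nonempty)
    (lam : ℝ) (hlam : 0 < lam) (x : EuclideanSpace ℝ (Fin n)) :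
    upperT lam (chi K) x = upperT lam (distSq lam K) x := by
  rw [upperT, upperT, convEnv_congr (affine_le_sub_chi_iff_le_sub_distSq hK hlam)]

/-- The upper transform of `χ_K` coincides with the upper transform of `D²_λ(·, K)`. -/
theorem upperT_chi_eq_upperT_distSq (n : ℕ) (hn : 1 ≤ n)
    (K : Set (EuclideanSpace ℝ (Fin n))) (hK : K.Nonempty) (hKc : IsClosed K)
    (lam : ℝ) (hlam : 0 < lam) (x : EuclideanSpace ℝ (Fin n)) :
    upperT lam (chi K) x = upperT lam (distSq lam K) x :=
  upperT_chi_eq_upperT_distSq_general n K hK lam hlam x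
end

section
/- Let n ≥ 1, let E, F ⊂ ℝⁿ be non-empty compact sets and let λ > 0. Then for all x ∈ ℝⁿ, |C^u_λ(χ_E)(x) − C^u_λ(χ_F)(x)| ≤ 2√λ · dist_H(E, F), i.e. the upper compensated convex transform of characteristic functions of compact sets is Hausdorff-Lipschitz continuous with constant 2√λ. -/
open scoped RealInnerProductSpace
open Metric

/-- The square of a nonnegative number drops by at most `2ε` when it is decreased by `ε`,
as long as it does not exceed `1`; beyond `1` compare with `1` instead. -/
theorem one_sub_two_mul_le_sq_add {r r' ε m : ℝ} (hr' : 0 ≤ r') (hε : 0 ≤ ε)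
    (hm : 0 ≤ m) (h1 : 1 ≤ r' ^ 2 + m) (h2 : r' ≤ r + ε) :
    1 - 2 * ε ≤ r ^ 2 + m := by
  rcases le_or_gt r' 1 with hr'1 | hr'1
  · rcases le_or_gt ε r' with hεr' | hεr'
    · nlinarith [sq_nonneg (r - (r' - ε)), mul_nonneg hε (sub_nonneg.2 hr'1)]
    · nlinarith [mul_nonneg hε hr', mul_le_mul hεr'.le hr'1 hr' hε]
  · rcases le_or_gt ε 1 with hε1 | hε1
    · nlinarith [sq_nonneg (r - (1 - ε))]
    · nlinarith [sq_nonneg r]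

theorem one_sub_le_mul_sq_norm_sub_add {V : Type*} [SeminormedAddCommGroup V]
    {lam δ m : ℝ} (hlam : 0 ≤ lam) (hm : 0 ≤ m) {q y y' : V}
    (hy' : 1 ≤ lam * ‖y' - q‖ ^ 2 + m) (hyy' : dist y y' ≤ δ) :
    1 - 2 * √lam * δ ≤ lam * ‖y - q‖ ^ 2 + m := by
  have hsq : ∀ z : V, lam * ‖z‖ ^ 2 = (√lam * ‖z‖) ^ 2 := fun z => by
    rw [mul_pow, Real.sq_sqrt hlam]
  have htri : ‖y' - q‖ ≤ ‖y - q‖ + δ := by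
    have := norm_sub_le_norm_sub_add_norm_sub y' y q
    rw [← dist_eq_norm y' y, dist_comm] at this
    linarith
  rw [hsq, mul_assoc]
  rw [hsq] at hy'
  refine one_sub_two_mul_le_sq_add (by positivity)
    (mul_nonneg (Real.sqrt_nonneg _) (dist_nonneg.trans hyy')) hm hy' ?_
  rw [← mul_add]
  gcongr

section CompleteSquare

variable {V : Type*} [NormedAddCommGroup V] [InnerProductSpace ℝ V] [FiniteDimensional ℝ V]

theorem AffineMap.exists_eq_inner_add (ℓ : V →ᵃ[ℝ] ℝ) : ∃ b : V, ∀ y, ℓ y = ⟪b, y⟫ + ℓ 0 := by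
  refine ⟨(InnerProductSpace.toDual ℝ V).symm (LinearMap.toContinuousLinearMap ℓ.linear),
    fun y => ?_⟩
  rw [InnerProductSpace.toDual_symm_apply, LinearMap.coe_toContinuousLinearMap', ← vadd_eq_add,
    ← ℓ.map_vadd, vadd_eq_add, add_zero]

theorem exists_mul_sq_norm_sub_affineMap_eq {lam : ℝ} (hlam : lam ≠ 0) (ℓ : V →ᵃ[ℝ] ℝ) :
    ∃ q : V, ∀ y, lam * ‖y‖ ^ 2 - ℓ y = lam * ‖y - q‖ ^ 2 + (lam * ‖q‖ ^ 2 - ℓ q) := by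
  obtain ⟨b, hb⟩ := ℓ.exists_eq_inner_add
  refine ⟨(2 * lam)⁻¹ • b, fun y => ?_⟩
  rw [hb y, hb ((2 * lam)⁻¹ • b), norm_sub_sq_real, real_inner_smul_right, real_inner_smul_right,
    norm_smul, mul_pow, Real.norm_eq_abs, sq_abs, ← real_inner_self_eq_norm_sq b,
    real_inner_comm y]
  field_simp
  ring

end CompleteSquare

section Envelope

variable {n : ℕ}

theorem le_convEnv {g : EuclideanSpace ℝ (Fin n) → ℝ} {ℓ : EuclideanSpace ℝ (Fin n) →ᵃ[ℝ] ℝ}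
    (hℓ : ∀ y, ℓ y ≤ g y) (x : EuclideanSpace ℝ (Fin n)) : ℓ x ≤ convEnv g x :=
  le_csSup ⟨g x, by rintro _ ⟨ℓ', hℓ', rfl⟩; exact hℓ' x⟩ ⟨ℓ, hℓ, rfl⟩

theorem convEnv_le_convEnv_add {g h : EuclideanSpace ℝ (Fin n) → ℝ} {c : ℝ}
    (hg : ∃ ℓ : EuclideanSpace ℝ (Fin n) →ᵃ[ℝ] ℝ, ∀ y, ℓ y ≤ g y)
    (hgh : ∀ ℓ : EuclideanSpace ℝ (Fin n) →ᵃ[ℝ] ℝ, (∀ y, ℓ y ≤ g y) → ∀ y, ℓ y - c ≤ h y)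
    (x : EuclideanSpace ℝ (Fin n)) : convEnv g x ≤ convEnv h x + c := by
  obtain ⟨ℓ₀, hℓ₀⟩ := hg
  refine csSup_le ⟨ℓ₀ x, ℓ₀, hℓ₀, rfl⟩ ?_
  rintro _ ⟨ℓ, hℓ, rfl⟩
  have := le_convEnv (ℓ := ℓ - AffineMap.const ℝ _ c) (by simpa using hgh ℓ hℓ) x
  simp only [AffineMap.coe_sub, AffineMap.coe_const, Pi.sub_apply, Function.const_apply] at this
  linarith

theorem exists_affineMap_le_mul_sq_norm_sub_chi (lam : ℝ) (hlam : 0 ≤ lam)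
    (K : Set (EuclideanSpace ℝ (Fin n))) :
    ∃ ℓ : EuclideanSpace ℝ (Fin n) →ᵃ[ℝ] ℝ, ∀ y, ℓ y ≤ lam * ‖y‖ ^ 2 - chi K y := by
  refine ⟨AffineMap.const ℝ _ (-1), fun y => ?_⟩
  have : chi K y ≤ 1 := Set.indicator_le_self' (fun _ _ => zero_le_one) y
  simp only [AffineMap.const_apply]
  nlinarith [sq_nonneg ‖y‖]

theorem affineMap_sub_le_mul_sq_norm_sub_chi {lam δ : ℝ} (hlam : 0 < lam) (hδ : 0 ≤ δ)
    {E F : Set (EuclideanSpace ℝ (Fin n))} (hEF : ∀ y ∈ E, ∃ y' ∈ F, dist y y' ≤ δ)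
    {ℓ : EuclideanSpace ℝ (Fin n) →ᵃ[ℝ] ℝ} (hℓ : ∀ y, ℓ y ≤ lam * ‖y‖ ^ 2 - chi F y)
    (y : EuclideanSpace ℝ (Fin n)) :
    ℓ y - 2 * √lam * δ ≤ lam * ‖y‖ ^ 2 - chi E y := by
  obtain ⟨q, hq⟩ := exists_mul_sq_norm_sub_affineMap_eq hlam.ne' ℓ
  have hchi_nonneg : ∀ (K : Set (EuclideanSpace ℝ (Fin n))) z, 0 ≤ chi K z :=
    fun K => Set.indicator_nonneg fun _ _ => zero_le_one
  have hm : 0 ≤ lam * ‖q‖ ^ 2 - ℓ q := by linarith [hℓ q, hchi_nonneg F q]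
  by_cases hy : y ∈ E
  · obtain ⟨y', hy'F, hyy'⟩ := hEF y hy
    have h1 : 1 ≤ lam * ‖y' - q‖ ^ 2 + (lam * ‖q‖ ^ 2 - ℓ q) := by
      have := hℓ y'
      rw [chi, Set.indicator_of_mem hy'F] at this
      linarith [hq y']
    have := one_sub_le_mul_sq_norm_sub_add hlam.le hm h1 hyy'
    rw [chi, Set.indicator_of_mem hy]
    linarith [hq y]
  · rw [chi, Set.indicator_of_notMem hy]
    have : 0 ≤ 2 * √lam * δ := by positivity
    linarith [hℓ y, hchi_nonneg F y]

end Envelope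

theorem exists_dist_le_hausdorffDist {α : Type*} [PseudoMetricSpace α] {s t : Set α}
    (ht : IsCompact t) (hne : t.Nonempty) (hfin : hausdorffEDist s t ≠ ⊤) {x : α} (hx : x ∈ s) :
    ∃ y ∈ t, dist x y ≤ hausdorffDist s t := by
  obtain ⟨y, hy, hxy⟩ := ht.exists_infDist_eq_dist hne x
  exact ⟨y, hy, hxy ▸ infDist_le_hausdorffDist_of_mem hx hfin⟩

theorem convEnv_mul_sq_norm_sub_chi_le {n : ℕ} {lam : ℝ} (hlam : 0 < lam)
    {E F : Set (EuclideanSpace ℝ (Fin n))} (hFc : IsCompact F) (hF : F.Nonempty)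
    (hfin : hausdorffEDist E F ≠ ⊤) (x : EuclideanSpace ℝ (Fin n)) :
    convEnv (fun y => lam * ‖y‖ ^ 2 - chi F y) x ≤
      convEnv (fun y => lam * ‖y‖ ^ 2 - chi E y) x + 2 * √lam * hausdorffDist E F :=
  convEnv_le_convEnv_add (exists_affineMap_le_mul_sq_norm_sub_chi lam hlam.le F)
    (fun _ hℓ => affineMap_sub_le_mul_sq_norm_sub_chi hlam hausdorffDist_nonneg
      (fun _ hy => exists_dist_le_hausdorffDist hFc hF hfin hy) hℓ) x

theorem upperT_chi_hausdorff_lipschitz_general (n : ℕ)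
    (E F : Set (EuclideanSpace ℝ (Fin n))) (hE : E.Nonempty) (hF : F.Nonempty)
    (hEc : IsCompact E) (hFc : IsCompact F)
    (lam : ℝ) (hlam : 0 < lam) (x : EuclideanSpace ℝ (Fin n)) :
    |upperT lam (chi E) x - upperT lam (chi F) x| ≤
      2 * Real.sqrt lam * Metric.hausdorffDist E F := by
  have hfin : hausdorffEDist E F ≠ ⊤ :=
    hausdorffEDist_ne_top_of_nonempty_of_bounded hE hF hEc.isBounded hFc.isBounded
  have hEF := convEnv_mul_sq_norm_sub_chi_le hlam hFc hF hfin x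
  have hFE := convEnv_mul_sq_norm_sub_chi_le hlam hEc hE
    (by rwa [hausdorffEDist_comm]) x
  rw [hausdorffDist_comm] at hFE
  unfold upperT
  rw [abs_le]
  constructor <;> linarith

/-- Hausdorff-Lipschitz continuity of the upper transform of characteristic
functions of compact sets. -/
theorem upperT_chi_hausdorff_lipschitz (n : ℕ) (hn : 1 ≤ n)
    (E F : Set (EuclideanSpace ℝ (Fin n))) (hE : E.Nonempty) (hF : F.Nonempty)
    (hEc : IsCompact E) (hFc : IsCompact F)
    (lam : ℝ) (hlam : 0 < lam) (x : EuclideanSpace ℝ (Fin n)) :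
    |upperT lam (chi E) x - upperT lam (chi F) x| ≤
      2 * Real.sqrt lam * Metric.hausdorffDist E F :=
  upperT_chi_hausdorff_lipschitz_general n E F hE hF hEc hFc lam hlam x
end

section
/- Let n ≥ 1, let E, F ⊂ ℝⁿ be non-empty compact sets and let λ > 0, τ > 0. Then for all x ∈ ℝⁿ, |SR_{λ,τ}(χ_E)(x) − SR_{λ,τ}(χ_F)(x)| ≤ 4√λ · dist_H(E, F), i.e. the stable ridge transform is Hausdorff-Lipschitz continuous with constant 4√λ. -/
/-- Lower compensated convex transform. -/
noncomputable def lowerT {n : ℕ} (lam : ℝ) (f : EuclideanSpace ℝ (Fin n) → ℝ)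
    (x : EuclideanSpace ℝ (Fin n)) : ℝ :=
  convEnv (fun y => f y + lam * ‖y‖ ^ 2) x - lam * ‖x‖ ^ 2

/-- Stable ridge transform `SR_{λ,τ}(χ_E) = C^u_λ(χ_E) − C^l_τ(C^u_λ(χ_E))`. -/
noncomputable def stableRidge {n : ℕ} (lam tau : ℝ) (E : Set (EuclideanSpace ℝ (Fin n)))
    (x : EuclideanSpace ℝ (Fin n)) : ℝ :=
  upperT lam (chi E) x - lowerT tau (fun y => upperT lam (chi E) y) x

/-!
The convex envelope is monotone and commutes with adding constants, hence is 1-Lipschitz for the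
sup norm; this controls the outer transform `C^l_τ`. For `C^u_λ(χ_E)` the point is that an affine
minorant `ℓ` of `λ|·|² − χ_F` drops by at most `2√λ · d_H(E, F)` when `χ_F` is replaced by `χ_E`:
for `y ∈ E` pick `z ∈ F` with `|y − z| ≤ d_H(E, F)`; along the line through `z` and `y`,
`λ|·|² − ℓ` is a nonnegative quadratic that is `≥ 1` at `z`, and its discriminant then forces it
to be `≥ 1 − 2√λ |y − z|` at `y`. So both terms of `SR_{λ,τ}` move by at most
`2√λ · d_H(E, F)`.
-/

open RealInnerProductSpace

section

variable {n : ℕ}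

lemma chi_nonneg (K : Set (EuclideanSpace ℝ (Fin n))) (y : EuclideanSpace ℝ (Fin n)) :
    0 ≤ chi K y :=
  Set.indicator_nonneg (fun _ _ => zero_le_one) y

lemma chi_le_one (K : Set (EuclideanSpace ℝ (Fin n))) (y : EuclideanSpace ℝ (Fin n)) :
    chi K y ≤ 1 :=
  Set.indicator_le_self' (fun _ _ => zero_le_one) y

lemma chi_of_mem {K : Set (EuclideanSpace ℝ (Fin n))} {y : EuclideanSpace ℝ (Fin n)}
    (h : y ∈ K) : chi K y = 1 :=
  Set.indicator_of_mem h _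

section ConvexEnvelope

variable {g g₁ g₂ : EuclideanSpace ℝ (Fin n) → ℝ}

lemma convEnv_le_add_of_minorant {c : ℝ} (ℓ₀ : EuclideanSpace ℝ (Fin n) →ᵃ[ℝ] ℝ)
    (hℓ₀ : ∀ y, ℓ₀ y ≤ g₁ y)
    (h : ∀ ℓ : EuclideanSpace ℝ (Fin n) →ᵃ[ℝ] ℝ, (∀ y, ℓ y ≤ g₁ y) → ∀ y, ℓ y - c ≤ g₂ y)
    (x : EuclideanSpace ℝ (Fin n)) : convEnv g₁ x ≤ convEnv g₂ x + c := by
  refine csSup_le ⟨ℓ₀ x, ℓ₀, hℓ₀, rfl⟩ ?_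
  rintro _ ⟨ℓ, hℓ, rfl⟩
  have hbdd : BddAbove {a : ℝ | ∃ ℓ : EuclideanSpace ℝ (Fin n) →ᵃ[ℝ] ℝ,
      (∀ y, ℓ y ≤ g₂ y) ∧ a = ℓ x} :=
    ⟨g₂ x, by rintro _ ⟨ℓ', hℓ', rfl⟩; exact hℓ' x⟩
  have := le_csSup hbdd ⟨ℓ - AffineMap.const ℝ _ c, h ℓ hℓ, rfl⟩
  simp only [AffineMap.coe_sub, AffineMap.coe_const, Pi.sub_apply, Function.const_apply] at this
  rw [convEnv]
  linarith

lemma convEnv_eq_zero_of_not_exists_minorant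
    (h : ¬ ∃ ℓ : EuclideanSpace ℝ (Fin n) →ᵃ[ℝ] ℝ, ∀ y, ℓ y ≤ g y)
    (x : EuclideanSpace ℝ (Fin n)) : convEnv g x = 0 := by
  have hempty : {a : ℝ | ∃ ℓ : EuclideanSpace ℝ (Fin n) →ᵃ[ℝ] ℝ, (∀ y, ℓ y ≤ g y) ∧ a = ℓ x} = ∅ :=
    Set.eq_empty_of_forall_notMem (by rintro _ ⟨ℓ, hℓ, -⟩; exact h ⟨ℓ, hℓ⟩)
  rw [convEnv, hempty, Real.sSup_empty]

lemma abs_convEnv_sub_le {δ : ℝ} (h : ∀ y, |g₁ y - g₂ y| ≤ δ) (x : EuclideanSpace ℝ (Fin n)) :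
    |convEnv g₁ x - convEnv g₂ x| ≤ δ := by
  have h₁₂ : ∀ ℓ : EuclideanSpace ℝ (Fin n) →ᵃ[ℝ] ℝ, (∀ y, ℓ y ≤ g₁ y) → ∀ y, ℓ y - δ ≤ g₂ y :=
    fun ℓ hℓ y => by linarith [hℓ y, (abs_le.mp (h y)).2]
  have h₂₁ : ∀ ℓ : EuclideanSpace ℝ (Fin n) →ᵃ[ℝ] ℝ, (∀ y, ℓ y ≤ g₂ y) → ∀ y, ℓ y - δ ≤ g₁ y :=
    fun ℓ hℓ y => by linarith [hℓ y, (abs_le.mp (h y)).1]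
  by_cases hex : ∃ ℓ : EuclideanSpace ℝ (Fin n) →ᵃ[ℝ] ℝ, ∀ y, ℓ y ≤ g₁ y
  · obtain ⟨ℓ₁, hℓ₁⟩ := hex
    have := convEnv_le_add_of_minorant ℓ₁ hℓ₁ h₁₂ x
    have := convEnv_le_add_of_minorant (ℓ₁ - AffineMap.const ℝ _ δ) (h₁₂ ℓ₁ hℓ₁) h₂₁ x
    rw [abs_le]
    constructor <;> linarith
  · have hex₂ : ¬ ∃ ℓ : EuclideanSpace ℝ (Fin n) →ᵃ[ℝ] ℝ, ∀ y, ℓ y ≤ g₂ y :=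
      fun ⟨ℓ, hℓ⟩ => hex ⟨ℓ - AffineMap.const ℝ _ δ, h₂₁ ℓ hℓ⟩
    rw [convEnv_eq_zero_of_not_exists_minorant hex, convEnv_eq_zero_of_not_exists_minorant hex₂,
      sub_zero, abs_zero]
    exact (abs_nonneg _).trans (h 0)

end ConvexEnvelope

lemma abs_lowerT_sub_le (tau : ℝ) {f₁ f₂ : EuclideanSpace ℝ (Fin n) → ℝ} {δ : ℝ}
    (h : ∀ y, |f₁ y - f₂ y| ≤ δ) (x : EuclideanSpace ℝ (Fin n)) :
    |lowerT tau f₁ x - lowerT tau f₂ x| ≤ δ := by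
  have := abs_convEnv_sub_le (g₁ := fun y => f₁ y + tau * ‖y‖ ^ 2)
    (g₂ := fun y => f₂ y + tau * ‖y‖ ^ 2) (fun y => by simpa using h y) x
  simpa [lowerT] using this

lemma one_sub_two_mul_sqrt_le_of_forall_quadratic_nonneg {a b c : ℝ} (ha : 0 ≤ a) (hc : 1 ≤ c)
    (h : ∀ t : ℝ, 0 ≤ a * (t * t) + b * t + c) : 1 - 2 * Real.sqrt a ≤ a + b + c := by
  have hdisc : b ^ 2 ≤ 4 * a * c := by
    have := discrim_le_zero h
    rw [discrim] at this
    linarith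
  obtain ⟨u, hu, rfl⟩ : ∃ u, 0 ≤ u ∧ u ^ 2 = a := ⟨Real.sqrt a, Real.sqrt_nonneg a, Real.sq_sqrt ha⟩
  obtain ⟨s, hs, rfl⟩ : ∃ s, 1 ≤ s ∧ s ^ 2 = c :=
    ⟨Real.sqrt c, Real.one_le_sqrt.mpr hc, Real.sq_sqrt (by linarith)⟩
  have hb : -(2 * u * s) ≤ b := by
    have : b ^ 2 ≤ (2 * u * s) ^ 2 := by linarith
    exact (abs_le_of_sq_le_sq' this (by positivity)).1
  rw [Real.sqrt_sq hu]
  nlinarith [sq_nonneg (s - 1 - u)]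

lemma mul_norm_add_smul_sq_sub_apply (lam : ℝ) (ℓ : EuclideanSpace ℝ (Fin n) →ᵃ[ℝ] ℝ)
    (z v : EuclideanSpace ℝ (Fin n)) (t : ℝ) :
    lam * ‖z + t • v‖ ^ 2 - ℓ (z + t • v) =
      lam * ‖v‖ ^ 2 * (t * t) + (2 * lam * ⟪z, v⟫ - ℓ.linear v) * t + (lam * ‖z‖ ^ 2 - ℓ z) := by
  have hℓ : ℓ (z + t • v) = t * ℓ.linear v + ℓ z := by
    rw [add_comm z, ← vadd_eq_add, ℓ.map_vadd, vadd_eq_add, map_smul, smul_eq_mul]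
  rw [hℓ, norm_add_sq_real, real_inner_smul_right, norm_smul, mul_pow, Real.norm_eq_abs, sq_abs]
  ring

lemma sub_le_mul_norm_sq_sub_chi {F F' : Set (EuclideanSpace ℝ (Fin n))} {lam η : ℝ}
    (hlam : 0 ≤ lam) (hη : 0 ≤ η) (hnear : ∀ y ∈ F', ∃ z ∈ F, dist y z ≤ η)
    (ℓ : EuclideanSpace ℝ (Fin n) →ᵃ[ℝ] ℝ) (hℓ : ∀ y, ℓ y ≤ lam * ‖y‖ ^ 2 - chi F y)
    (y : EuclideanSpace ℝ (Fin n)) :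
    ℓ y - 2 * Real.sqrt lam * η ≤ lam * ‖y‖ ^ 2 - chi F' y := by
  by_cases hy : y ∈ F'
  · obtain ⟨z, hz, hyz⟩ := hnear y hy
    have hline := mul_norm_add_smul_sq_sub_apply lam ℓ z (y - z)
    have hz₁ : 1 ≤ lam * ‖z‖ ^ 2 - ℓ z := by linarith [hℓ z, chi_of_mem hz]
    have hquad := one_sub_two_mul_sqrt_le_of_forall_quadratic_nonneg
      (a := lam * ‖y - z‖ ^ 2) (by positivity) hz₁
      fun t => by rw [← hline t]; linarith [hℓ (z + t • (y - z)), chi_nonneg F (z + t • (y - z))]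
    have hline_one : lam * ‖y‖ ^ 2 - ℓ y = lam * ‖y - z‖ ^ 2 +
        (2 * lam * ⟪z, y - z⟫ - ℓ.linear (y - z)) + (lam * ‖z‖ ^ 2 - ℓ z) := by
      simpa using hline 1
    rw [Real.sqrt_mul hlam, Real.sqrt_sq (norm_nonneg _)] at hquad
    have := mul_le_mul_of_nonneg_left (dist_eq_norm y z ▸ hyz) (Real.sqrt_nonneg lam)
    linarith [chi_le_one F' y]
  · rw [chi, Set.indicator_of_notMem hy]
    linarith [hℓ y, chi_nonneg F y, mul_nonneg (Real.sqrt_nonneg lam) hη]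

lemma upperT_chi_le_add {E F : Set (EuclideanSpace ℝ (Fin n))} {lam η : ℝ}
    (hlam : 0 ≤ lam) (hη : 0 ≤ η) (hnear : ∀ y ∈ E, ∃ z ∈ F, dist y z ≤ η)
    (x : EuclideanSpace ℝ (Fin n)) :
    upperT lam (chi E) x ≤ upperT lam (chi F) x + 2 * Real.sqrt lam * η := by
  have hminorant : ∀ y, AffineMap.const ℝ (EuclideanSpace ℝ (Fin n)) (-1 : ℝ) y ≤
      lam * ‖y‖ ^ 2 - chi F y := fun y => by
    simp only [AffineMap.const_apply]
    linarith [chi_le_one F y, mul_nonneg hlam (sq_nonneg ‖y‖)]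
  have := convEnv_le_add_of_minorant _ hminorant
    (sub_le_mul_norm_sq_sub_chi hlam hη hnear) x
  rw [upperT, upperT]
  linarith

lemma Metric.exists_dist_le_hausdorffDist_of_mem {α : Type*} [PseudoMetricSpace α]
    {s t : Set α} {x : α} (hx : x ∈ s) (ht : IsCompact t) (ht₀ : t.Nonempty)
    (fin : Metric.hausdorffEDist s t ≠ ⊤) : ∃ y ∈ t, dist x y ≤ Metric.hausdorffDist s t := by
  obtain ⟨y, hy, hxy⟩ := ht.exists_infDist_eq_dist ht₀ x
  exact ⟨y, hy, hxy ▸ Metric.infDist_le_hausdorffDist_of_mem hx fin⟩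

lemma abs_upperT_chi_sub_le {E F : Set (EuclideanSpace ℝ (Fin n))} (hE : E.Nonempty)
    (hF : F.Nonempty) (hEc : IsCompact E) (hFc : IsCompact F) {lam : ℝ} (hlam : 0 ≤ lam)
    (x : EuclideanSpace ℝ (Fin n)) :
    |upperT lam (chi E) x - upperT lam (chi F) x| ≤
      2 * Real.sqrt lam * Metric.hausdorffDist E F := by
  have fin := Metric.hausdorffEDist_ne_top_of_nonempty_of_bounded hE hF hEc.isBounded
    hFc.isBounded
  have hEF := upperT_chi_le_add hlam Metric.hausdorffDist_nonneg
    (fun y hy => Metric.exists_dist_le_hausdorffDist_of_mem hy hFc hF fin) x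
  have hFE := upperT_chi_le_add hlam Metric.hausdorffDist_nonneg
    (fun y hy => Metric.exists_dist_le_hausdorffDist_of_mem hy hEc hE
      (by rwa [Metric.hausdorffEDist_comm])) x
  rw [Metric.hausdorffDist_comm] at hFE
  rw [abs_le]
  constructor <;> linarith

end

theorem stableRidge_hausdorff_lipschitz_general (n : ℕ)
    (E F : Set (EuclideanSpace ℝ (Fin n))) (hE : E.Nonempty) (hF : F.Nonempty)
    (hEc : IsCompact E) (hFc : IsCompact F)
    (lam tau : ℝ) (hlam : 0 < lam) (x : EuclideanSpace ℝ (Fin n)) :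
    |stableRidge lam tau E x - stableRidge lam tau F x| ≤
      4 * Real.sqrt lam * Metric.hausdorffDist E F := by
  have hupper := fun y => abs_upperT_chi_sub_le hE hF hEc hFc hlam.le y
  have hlower := abs_lowerT_sub_le tau hupper x
  calc |stableRidge lam tau E x - stableRidge lam tau F x|
      = |(upperT lam (chi E) x - upperT lam (chi F) x) -
          (lowerT tau (fun y => upperT lam (chi E) y) x -
            lowerT tau (fun y => upperT lam (chi F) y) x)| := by
        rw [stableRidge, stableRidge]; ring_nf
    _ ≤ |upperT lam (chi E) x - upperT lam (chi F) x| +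
          |lowerT tau (fun y => upperT lam (chi E) y) x -
            lowerT tau (fun y => upperT lam (chi F) y) x| := abs_sub _ _
    _ ≤ 2 * Real.sqrt lam * Metric.hausdorffDist E F +
          2 * Real.sqrt lam * Metric.hausdorffDist E F := add_le_add (hupper x) hlower
    _ = 4 * Real.sqrt lam * Metric.hausdorffDist E F := by ring

/-- Hausdorff-Lipschitz continuity of the stable ridge transform. -/
theorem stableRidge_hausdorff_lipschitz (n : ℕ) (hn : 1 ≤ n)
    (E F : Set (EuclideanSpace ℝ (Fin n))) (hE : E.Nonempty) (hF : F.Nonempty)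
    (hEc : IsCompact E) (hFc : IsCompact F)
    (lam tau : ℝ) (hlam : 0 < lam) (htau : 0 < tau) (x : EuclideanSpace ℝ (Fin n)) :
    |stableRidge lam tau E x - stableRidge lam tau F x| ≤
      4 * Real.sqrt lam * Metric.hausdorffDist E F :=
  stableRidge_hausdorff_lipschitz_general n E F hE hF hEc hFc lam tau hlam x
end
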